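/- Let R be a commutative ring, n ≥ 3, and let α be a right invertible 2×n matrix over R with rows (a_1,…,a_n) and (b_1,…,b_n). Then the two rows are elementarily equivalent: there exists ε ∈ E_n(R) with (a_1,…,a_n)ε = (b_1,…,b_n). -/

import Mathlib

open Matrix Polynomial

/-- `ElemGroup R n` is the elementary subgroup `E_n(R)`: generated by the elementary
matrices `e_ij(λ) = I + λ E_ij`, `i ≠ j`. -/
def ElemGroup (R : Type*) [CommRing R] (n : ℕ) : Submonoid (Matrix (Fin n) (Fin n) R) :=
  Submonoid.closure {A | ∃ (i j : Fin n) (c : R), i ≠ j ∧ A = Matrix.transvection i j c}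

/-!
Let `p, q` be the columns of a right inverse of `α`, so that `a ⬝ᵥ p = 1`, `a ⬝ᵥ q = 0`,
`b ⬝ᵥ p = 0`, `b ⬝ᵥ q = 1` for the rows `a, b` of `α`. Then `a (1 + p bᵀ) = a + b` and
`(a + b) (1 - q aᵀ) = b`, so it suffices that `1 + u vᵀ ∈ E_n(R)` whenever `v ⬝ᵥ u = 0`
and `v` is unimodular (Suslin). With `v ⬝ᵥ w = 1`, the vector `u` is the sum of the vectors
`u_i w_j (v_j e_i - v_i e_j)`, each orthogonal to `v` and, as `n ≥ 3`, vanishing at some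
third coordinate `k`. Finally, if `u_k = 0` and `v ⬝ᵥ u = 0`, then `1 + u vᵀ` is a column
operation times the commutator of `1 + u e_kᵀ` and `1 + e_k v'ᵀ`, where `v' = v - v_k e_k`.
-/

theorem one_add_mul_one_add_mul_one_sub_mul_one_sub {M : Type*} [Ring M] {A B : M}
    (hA : A * A = 0) (hB : B * B = 0) (hBA : B * A = 0) :
    (1 + A) * (1 + B) * (1 - A) * (1 - B) = 1 + A * B := by
  have hABA : A * B * A = 0 := by rw [mul_assoc, hBA, mul_zero]
  have hABB : A * B * B = 0 := by rw [mul_assoc, hB, mul_zero]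
  calc (1 + A) * (1 + B) * (1 - A) * (1 - B)
      = 1 + A * B - A * A - B * A - A * B * A - B * B - A * B * B
        + (A * A + B * A + A * B * A) * B := by noncomm_ring
    _ = 1 + A * B := by simp [hA, hB, hBA, hABA, hABB]

section vecMulVec

variable {S m : Type*} [Semiring S] [Fintype m] [DecidableEq m]

theorem vecMul_one_add_vecMulVec (a u v : m → S) :
    a ᵥ* (1 + vecMulVec u v) = a + (a ⬝ᵥ u) • v := by
  rw [vecMul_add, vecMul_one, vecMul_vecMulVec]

theorem one_add_vecMulVec_mul_one_add_vecMulVec {u v x y : m → S} (h : v ⬝ᵥ x = 0) :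
    (1 + vecMulVec u v) * (1 + vecMulVec x y) = 1 + (vecMulVec u v + vecMulVec x y) := by
  simp only [add_mul, mul_add, one_mul, mul_one, vecMulVec_mul_vecMulVec, h, zero_smul,
    vecMulVec_zero, add_zero, add_assoc]

theorem eq_sum_erase_single_of_apply_eq_zero {w : m → S} {k : m} (hw : w k = 0) :
    w = ∑ l ∈ Finset.univ.erase k, Pi.single l (w l) := by
  rw [Finset.sum_erase _ (by rw [hw, Pi.single_zero]), Finset.univ_sum_single]

end vecMulVec

theorem sum_sum_single_sub_single {R m : Type*} [CommRing R] [Fintype m] [DecidableEq m]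
    (u v w : m → R) :
    ∑ i, ∑ j, (Pi.single i (u i * w j * v j) - Pi.single j (u i * w j * v i))
      = (v ⬝ᵥ w) • u - (v ⬝ᵥ u) • w := by
  ext l
  simp only [Finset.sum_apply, Pi.sub_apply, Pi.single_apply, Finset.sum_sub_distrib,
    Pi.smul_apply, smul_eq_mul]
  rw [Finset.sum_comm (f := fun i j ↦ if l = j then _ else _)]
  simp only [Finset.sum_ite_irrel, Finset.sum_const_zero, Finset.sum_ite_eq, Finset.mem_univ,
    ↓reduceIte, dotProduct, Finset.sum_mul]
  congr 1 <;> exact Finset.sum_congr rfl fun _ _ ↦ by ring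

namespace ElemGroup

variable {R : Type*} [CommRing R] {n : ℕ}

theorem one_add_vecMulVec_single_single_mem {i j : Fin n} (hij : i ≠ j) (c d : R) :
    1 + vecMulVec (Pi.single i c) (Pi.single j d) ∈ ElemGroup R n := by
  refine Submonoid.subset_closure ⟨i, j, c * d, hij, ?_⟩
  rw [transvection]
  congr 1
  ext r s
  simp only [vecMulVec_apply, single_apply, Pi.single_apply]
  grind

theorem one_add_vecMulVec_sum_left_mem {ι : Type*} {v : Fin n → R} {s : Finset ι}
    {g : ι → Fin n → R}
    (h : ∀ l ∈ s, v ⬝ᵥ g l = 0 ∧ 1 + vecMulVec (g l) v ∈ ElemGroup R n) :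
    1 + vecMulVec (∑ l ∈ s, g l) v ∈ ElemGroup R n := by
  refine (Finset.sum_induction g (fun x ↦ v ⬝ᵥ x = 0 ∧ 1 + vecMulVec x v ∈ ElemGroup R n)
    (fun x y hx hy ↦ ⟨?_, ?_⟩) (by simp) h).2
  · rw [dotProduct_add, hx.1, hy.1, add_zero]
  · rw [add_vecMulVec, ← one_add_vecMulVec_mul_one_add_vecMulVec hy.1]
    exact mul_mem hx.2 hy.2

theorem one_add_vecMulVec_sum_right_mem {ι : Type*} {u : Fin n → R} {s : Finset ι}
    {g : ι → Fin n → R}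
    (h : ∀ l ∈ s, g l ⬝ᵥ u = 0 ∧ 1 + vecMulVec u (g l) ∈ ElemGroup R n) :
    1 + vecMulVec u (∑ l ∈ s, g l) ∈ ElemGroup R n := by
  refine (Finset.sum_induction g (fun y ↦ y ⬝ᵥ u = 0 ∧ 1 + vecMulVec u y ∈ ElemGroup R n)
    (fun x y hx hy ↦ ⟨?_, ?_⟩) (by simp) h).2
  · rw [add_dotProduct, hx.1, hy.1, add_zero]
  · rw [vecMulVec_add, ← one_add_vecMulVec_mul_one_add_vecMulVec hx.1]
    exact mul_mem hx.2 hy.2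

theorem one_add_single_vecMulVec_mem {k : Fin n} (t : R) {w : Fin n → R} (hw : w k = 0) :
    1 + vecMulVec (Pi.single k t) w ∈ ElemGroup R n := by
  rw [eq_sum_erase_single_of_apply_eq_zero hw]
  refine one_add_vecMulVec_sum_right_mem fun l hl ↦ ?_
  have hlk := Finset.ne_of_mem_erase hl
  exact ⟨by simp [hlk], one_add_vecMulVec_single_single_mem hlk.symm _ _⟩

theorem one_add_vecMulVec_single_mem {k : Fin n} {u : Fin n → R} (hu : u k = 0) (t : R) :
    1 + vecMulVec u (Pi.single k t) ∈ ElemGroup R n := by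
  rw [eq_sum_erase_single_of_apply_eq_zero hu]
  refine one_add_vecMulVec_sum_left_mem fun l hl ↦ ?_
  have hlk := Finset.ne_of_mem_erase hl
  exact ⟨by simp [hlk.symm], one_add_vecMulVec_single_single_mem hlk _ _⟩

theorem one_add_vecMulVec_mem_of_apply_eq_zero {u v : Fin n → R} {k : Fin n} (hu : u k = 0)
    (hvu : v ⬝ᵥ u = 0) : 1 + vecMulVec u v ∈ ElemGroup R n := by
  set e : Fin n → R := Pi.single k 1
  set v' := v - Pi.single k (v k)
  have hv' : v' k = 0 := by simp [v']
  have hv'u : v' ⬝ᵥ u = 0 := by simp [v', sub_dotProduct, hvu, hu]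
  have hsplit :
      1 + vecMulVec u v = (1 + vecMulVec u v') * (1 + vecMulVec u (Pi.single k (v k))) := by
    rw [one_add_vecMulVec_mul_one_add_vecMulVec hv'u, ← vecMulVec_add, sub_add_cancel]
  have hcomm : 1 + vecMulVec u v'
      = (1 + vecMulVec u e) * (1 + vecMulVec e v') * (1 - vecMulVec u e)
        * (1 - vecMulVec e v') := by
    rw [one_add_mul_one_add_mul_one_sub_mul_one_sub] <;>
      simp [e, vecMulVec_mul_vecMulVec, hu, hv', hv'u]
  rw [hsplit, hcomm, sub_eq_add_neg, sub_eq_add_neg, ← neg_vecMulVec, ← vecMulVec_neg]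
  refine mul_mem (mul_mem (mul_mem (mul_mem ?_ ?_) ?_) ?_) (one_add_vecMulVec_single_mem hu _)
  · exact one_add_vecMulVec_single_mem hu 1
  · exact one_add_single_vecMulVec_mem 1 hv'
  · exact one_add_vecMulVec_single_mem (by simp [hu]) 1
  · exact one_add_single_vecMulVec_mem 1 (by simp [hv'])

theorem one_add_vecMulVec_single_sub_single_mem (hn : 3 ≤ n) (i j : Fin n) (c : R)
    (v : Fin n → R) :
    1 + vecMulVec (Pi.single i (c * v j) - Pi.single j (c * v i)) v ∈ ElemGroup R n := by
  obtain ⟨k, hki, hkj⟩ := Fin.exists_ne_and_ne_of_two_lt i j (by omega)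
  refine one_add_vecMulVec_mem_of_apply_eq_zero (k := k) (by simp [hki, hkj]) ?_
  simp only [dotProduct_sub, dotProduct_single]
  ring

theorem one_add_vecMulVec_mem (hn : 3 ≤ n) {u v w : Fin n → R} (hvu : v ⬝ᵥ u = 0)
    (hvw : v ⬝ᵥ w = 1) : 1 + vecMulVec u v ∈ ElemGroup R n := by
  have hu : u = ∑ i, ∑ j, (Pi.single i (u i * w j * v j) - Pi.single j (u i * w j * v i)) := by
    rw [sum_sum_single_sub_single, hvu, hvw, one_smul, zero_smul, sub_zero]
  rw [hu, ← Fintype.sum_prod_type']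
  refine one_add_vecMulVec_sum_left_mem fun p _ ↦ ⟨?_, ?_⟩
  · simp only [dotProduct_sub, dotProduct_single]
    ring
  · exact one_add_vecMulVec_single_sub_single_mem hn p.1 p.2 _ v

end ElemGroup

theorem stmt5_general {R : Type*} [CommRing R] {n : ℕ} (hn : 3 ≤ n)
    (α : Matrix (Fin 2) (Fin n) R) (hα : ∃ β : Matrix (Fin n) (Fin 2) R, α * β = 1) :
    ∃ ε ∈ ElemGroup R n, Matrix.vecMul (α 0) ε = α 1 := by
  obtain ⟨β, hβ⟩ := hα
  have hdot (i j : Fin 2) : α i ⬝ᵥ βᵀ j = if i = j then 1 else 0 := by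
    rw [← one_apply, ← hβ, mul_apply']
    rfl
  refine ⟨(1 + vecMulVec (βᵀ 0) (α 1)) * (1 + vecMulVec (-βᵀ 1) (α 0)),
    mul_mem (ElemGroup.one_add_vecMulVec_mem hn (hdot 1 0) (hdot 1 1))
      (ElemGroup.one_add_vecMulVec_mem hn (by simp [hdot]) (hdot 0 0)), ?_⟩
  rw [← vecMul_vecMul, vecMul_one_add_vecMulVec, vecMul_one_add_vecMulVec]
  simp [hdot, add_dotProduct]

/-- the two rows of a right invertible `2 × n` matrix (`n ≥ 3`) are
elementarily equivalent. -/
theorem stmt5 {R : Type*} [CommRing R] [Nontrivial R] {n : ℕ} (hn : 3 ≤ n)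
    (α : Matrix (Fin 2) (Fin n) R) (hα : ∃ β : Matrix (Fin n) (Fin 2) R, α * β = 1) :
    ∃ ε ∈ ElemGroup R n, Matrix.vecMul (α 0) ε = α 1 :=
  stmt5_general hn α hα
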